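/- arXiv:1703.02368 — 3 statements merged into one kernel-verified Lean document; each statement's English description precedes it below -/
import Mathlib

section
/- Let ℋ be a continuous function on an open set O ⊆ ℝ³ and let ψ: ℝ × (−R,R) → O ⊆ ℝ³ be a C² map satisfying ψ_uu + ψ_vv = 2 ℋ(ψ) ψ_u ×_L ψ_v on ℝ × (−R,R), with ψ(u,0) = 0 for all u ∈ ℝ and with null initial velocity: ⟨∂_vψ(u,0), ∂_vψ(u,0)⟩_L = 0 for all u ∈ ℝ. Then ψ satisfies the conformality conditions ⟨ψ_u,ψ_u⟩_L = ⟨ψ_v,ψ_v⟩_L and ⟨ψ_u,ψ_v⟩_L = 0 at every point of ℝ × (−R,R). -/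
noncomputable section

open Real Set Metric Filter MeasureTheory

/-- Points of Minkowski 3-space, as nested pairs. -/
abbrev R3 : Type := ℝ × ℝ × ℝ

/-- The Lorentzian inner product `⟨a,b⟩_L = a₁b₁ + a₂b₂ − a₃b₃` of Minkowski 3-space. -/
def lor (a b : R3) : ℝ := a.1 * b.1 + a.2.1 * b.2.1 - a.2.2 * b.2.2

/-- The Lorentzian cross product
`a ×_L b = (a₃b₂ − a₂b₃, a₁b₃ − a₃b₁, a₁b₂ − a₂b₁)`. -/
def lcross (a b : R3) : R3 :=
  (a.2.2 * b.2.1 - a.2.1 * b.2.2, a.1 * b.2.2 - a.2.2 * b.1, a.1 * b.2.1 - a.2.1 * b.1)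

/-- Partial derivative with respect to the first variable. -/
def pd1 {E : Type*} [NormedAddCommGroup E] [NormedSpace ℝ E]
    (f : ℝ × ℝ → E) (p : ℝ × ℝ) : E := fderiv ℝ f p (1, 0)

/-- Partial derivative with respect to the second variable. -/
def pd2 {E : Type*} [NormedAddCommGroup E] [NormedSpace ℝ E]
    (f : ℝ × ℝ → E) (p : ℝ × ℝ) : E := fderiv ℝ f p (0, 1)

def zx (z : ℝ × ℝ → ℝ) : ℝ × ℝ → ℝ := pd1 z
def zy (z : ℝ × ℝ → ℝ) : ℝ × ℝ → ℝ := pd2 z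
def zxx (z : ℝ × ℝ → ℝ) : ℝ × ℝ → ℝ := pd1 (zx z)
def zxy (z : ℝ × ℝ → ℝ) : ℝ × ℝ → ℝ := pd2 (zx z)
def zyy (z : ℝ × ℝ → ℝ) : ℝ × ℝ → ℝ := pd2 (zy z)

/-- Hessian determinant `z_xx z_yy − z_xy²`. -/
def hessDet (z : ℝ × ℝ → ℝ) (p : ℝ × ℝ) : ℝ := zxx z p * zyy z p - (zxy z p) ^ 2

/-- The punctured disk `{(x,y) : 0 < (x−x₀)² + (y−y₀)² < ρ²}`. -/
def PDisk (x₀ y₀ ρ : ℝ) : Set (ℝ × ℝ) :=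
  {p | 0 < (p.1 - x₀) ^ 2 + (p.2 - y₀) ^ 2 ∧ (p.1 - x₀) ^ 2 + (p.2 - y₀) ^ 2 < ρ ^ 2}

/-- `z` is an elliptic solution of the prescribed mean curvature equation for `H` on `U`,
with graph contained in `O`. -/
def IsEllSol (H : R3 → ℝ) (O : Set R3) (U : Set (ℝ × ℝ)) (z : ℝ × ℝ → ℝ) : Prop :=
  ContDiffOn ℝ 2 z U ∧
  (∀ p ∈ U, ((p.1, p.2, z p) : R3) ∈ O) ∧
  (∀ p ∈ U, (zx z p) ^ 2 + (zy z p) ^ 2 < 1) ∧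
  (∀ p ∈ U,
    (1 - (zy z p) ^ 2) * zxx z p + 2 * zx z p * zy z p * zxy z p
        + (1 - (zx z p) ^ 2) * zyy z p
      = 2 * H (p.1, p.2, z p) * (1 - (zx z p) ^ 2 - (zy z p) ^ 2) ^ ((3 : ℝ) / 2))

/-- The isolated singularity of `z` at `(x₀,y₀)` is removable: some `C²` function on a full
disk centered at `(x₀,y₀)` agrees with `z` on a punctured neighborhood. -/
def RemovableSing (x₀ y₀ : ℝ) (z : ℝ × ℝ → ℝ) : Prop :=
  ∃ ε > 0, ∃ Z : ℝ × ℝ → ℝ,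
    ContDiffOn ℝ 2 Z (ball ((x₀, y₀) : ℝ × ℝ) ε) ∧
    ∀ p ∈ ball ((x₀, y₀) : ℝ × ℝ) ε, p ≠ (x₀, y₀) → Z p = z p

/-- `H` is of class `C^{k,α}` on `O`: it is `C^k` and its `k`-th derivative is locally
`α`-Hölder on `O`. -/
def IsCkalpha (k : ℕ) (α : NNReal) (H : R3 → ℝ) (O : Set R3) : Prop :=
  ContDiffOn ℝ k H O ∧
  ∀ p ∈ O, ∃ ε > 0, ∃ C : NNReal,
    HolderOnWith C α (iteratedFDeriv ℝ k H) (ball p ε ∩ O)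

/-- The open strip `ℝ × (0,R)`. -/
def Strip (R : ℝ) : Set (ℝ × ℝ) := {p | 0 < p.2 ∧ p.2 < R}

/-- The open strip `ℝ × (−R,R)`. -/
def Strip2 (R : ℝ) : Set (ℝ × ℝ) := {p | -R < p.2 ∧ p.2 < R}

/-- The half-open strip `ℝ × [0,R)`. -/
def StripCl (R : ℝ) : Set (ℝ × ℝ) := {p | 0 ≤ p.2 ∧ p.2 < R}

/-- First two components of `ψ`: the planar projection `Π = (ψ₁, ψ₂)`. -/
def Pi2 (ψ : ℝ × ℝ → R3) (p : ℝ × ℝ) : ℝ × ℝ := ((ψ p).1, (ψ p).2.1)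

def comp1 (ψ : ℝ × ℝ → R3) : ℝ × ℝ → ℝ := fun p => (ψ p).1
def comp2 (ψ : ℝ × ℝ → R3) : ℝ × ℝ → ℝ := fun p => (ψ p).2.1
def comp3 (ψ : ℝ × ℝ → R3) : ℝ × ℝ → ℝ := fun p => (ψ p).2.2

/-- `ψ : ℝ × (0,R) → ℝ³` is a conformal parametrization of the graph of `z` near the
singularity `(x₀,y₀)`: it is 2π-periodic in `u`, its planar projection induces a
diffeomorphism with positive Jacobian from `(ℝ/2πℤ) × (0,R)` onto a punctured
neighborhood `W ⊆ Ω` of `(x₀,y₀)`, its third component is `z` of the first two, and the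
conformality conditions hold. -/
def IsConfParam (z : ℝ × ℝ → ℝ) (Ω : Set (ℝ × ℝ)) (x₀ y₀ R : ℝ)
    (ψ : ℝ × ℝ → R3) : Prop :=
  0 < R ∧
  ContDiffOn ℝ 1 ψ (Strip R) ∧
  (∀ u v : ℝ, ψ (u + 2 * π, v) = ψ (u, v)) ∧
  (∃ W : Set (ℝ × ℝ), W ⊆ Ω ∧ ((x₀, y₀) : ℝ × ℝ) ∉ W ∧
      insert ((x₀, y₀) : ℝ × ℝ) W ∈ nhds ((x₀, y₀) : ℝ × ℝ) ∧
      Pi2 ψ '' Strip R = W) ∧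
  (∀ p ∈ Strip R, ∀ q ∈ Strip R, Pi2 ψ p = Pi2 ψ q →
      p.2 = q.2 ∧ ∃ n : ℤ, p.1 - q.1 = 2 * π * n) ∧
  (∀ p ∈ Strip R,
      0 < pd1 (comp1 ψ) p * pd2 (comp2 ψ) p - pd2 (comp1 ψ) p * pd1 (comp2 ψ) p) ∧
  (∀ p ∈ Strip R, comp3 ψ p = z (Pi2 ψ p)) ∧
  (∀ p ∈ Strip R,
      lor (pd1 ψ p) (pd1 ψ p) = lor (pd2 ψ p) (pd2 ψ p) ∧
      0 < lor (pd1 ψ p) (pd1 ψ p) ∧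
      lor (pd1 ψ p) (pd2 ψ p) = 0)

/-- `ψ` extends real-analytically across `v = 0`, with `ψ(u,0) = p₀` and
`∂_vψ(u,0) = A(u)(cos u, −sin u, 1)`. -/
def ExtAnal (ψ : ℝ × ℝ → R3) (R : ℝ) (p₀ : R3) (A : ℝ → ℝ) : Prop :=
  ∃ ε > 0, ∃ Ψ : ℝ × ℝ → R3,
    AnalyticOnNhd ℝ Ψ {p : ℝ × ℝ | -ε < p.2 ∧ p.2 < R} ∧
    (∀ p ∈ Strip R, Ψ p = ψ p) ∧
    (∀ u : ℝ, Ψ (u, 0) = p₀) ∧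
    (∀ u : ℝ, pd2 Ψ (u, 0) = (A u * Real.cos u, -(A u * Real.sin u), A u))

/-- The class `𝒜₂` of 2π-periodic, real-analytic, nowhere vanishing functions. -/
def MemA2 (A : ℝ → ℝ) : Prop :=
  AnalyticOnNhd ℝ A univ ∧ (∀ u : ℝ, A (u + 2 * π) = A u) ∧ ∀ u : ℝ, A u ≠ 0

/-- The class `𝒜₁`: elliptic solutions on a punctured disk of radius `ρ` centered at
`(x₀,y₀)`, extending continuously with value `z₀`, whose Hessian determinant is
nonvanishing on a punctured neighborhood of `(x₀,y₀)`. -/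
def MemA1 (H : R3 → ℝ) (O : Set R3) (x₀ y₀ z₀ ρ : ℝ) (z : ℝ × ℝ → ℝ) : Prop :=
  0 < ρ ∧ IsEllSol H O (PDisk x₀ y₀ ρ) z ∧
  Tendsto z (nhdsWithin ((x₀, y₀) : ℝ × ℝ) (PDisk x₀ y₀ ρ)) (nhds z₀) ∧
  ∃ ε : ℝ, 0 < ε ∧ ε ≤ ρ ∧ ∀ p ∈ PDisk x₀ y₀ ε, hessDet z p ≠ 0

/-- `z` corresponds to `A`: some conformal parametrization of the graph of `z` near the
singularity extends real-analytically across `v = 0` with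
`∂_vψ(u,0) = A(u)(cos u, −sin u, 1)`. -/
def Corr (z : ℝ × ℝ → ℝ) (x₀ y₀ z₀ ρ : ℝ) (A : ℝ → ℝ) : Prop :=
  ∃ R : ℝ, ∃ ψ : ℝ × ℝ → R3,
    IsConfParam z (PDisk x₀ y₀ ρ) x₀ y₀ R ψ ∧ ExtAnal ψ R ((x₀, y₀, z₀) : R3) A

/-- The induced (first fundamental form) metric of the graph of `z`,
`ds² = (1−z_x²)dx² − 2 z_x z_y dx dy + (1−z_y²)dy²`, as a bilinear form. -/
def dsq (z : ℝ × ℝ → ℝ) (p : ℝ × ℝ) (ξ η : ℝ × ℝ) : ℝ :=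
  (1 - (zx z p) ^ 2) * ξ.1 * η.1 - zx z p * zy z p * (ξ.1 * η.2 + ξ.2 * η.1)
    + (1 - (zy z p) ^ 2) * ξ.2 * η.2

/-- `(Ω, ds²)` is conformally equivalent to the planar domain `D`: there is a `C¹`
diffeomorphism `Φ : Ω → D` and a positive function `λ` with
`⟨DΦ(ξ), DΦ(η)⟩_euc = λ · ds²(ξ,η)`. -/
def ConfEquiv (z : ℝ × ℝ → ℝ) (Ω D : Set (ℝ × ℝ)) : Prop :=
  ∃ (Φ : ℝ × ℝ → ℝ × ℝ) (Φinv : ℝ × ℝ → ℝ × ℝ) (lam : ℝ × ℝ → ℝ),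
    ContDiffOn ℝ 1 Φ Ω ∧ ContDiffOn ℝ 1 Φinv D ∧
    (∀ p ∈ Ω, Φ p ∈ D ∧ Φinv (Φ p) = p) ∧
    (∀ q ∈ D, Φinv q ∈ Ω ∧ Φ (Φinv q) = q) ∧
    (∀ p ∈ Ω, 0 < lam p ∧
      ∀ ξ η : ℝ × ℝ, (fderiv ℝ Φ p ξ).1 * (fderiv ℝ Φ p η).1
          + (fderiv ℝ Φ p ξ).2 * (fderiv ℝ Φ p η).2 = lam p * dsq z p ξ η)

/-!
The Hopf differential `⟨ψ_u,ψ_u⟩_L − ⟨ψ_v,ψ_v⟩_L − 2i⟨ψ_u,ψ_v⟩_L` is holomorphic in `u + iv`: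
`ψ_uu + ψ_vv` is a multiple of `ψ_u ×_L ψ_v`, hence Lorentz-orthogonal to `ψ_u` and `ψ_v`, and
this turns the derivatives of its real and imaginary parts into the Cauchy–Riemann equations.
On the axis `v = 0` we have `ψ_u = 0` and `ψ_v` null, so it vanishes there; by the identity
theorem it vanishes on the whole (connected) strip, which is exactly conformality.
-/

lemma lor_comm (a b : R3) : lor a b = lor b a := by
  simp only [lor]; ring

lemma lor_lcross_left (a b : R3) : lor (lcross a b) a = 0 := by
  simp only [lor, lcross]; ring

lemma lor_lcross_right (a b : R3) : lor (lcross a b) b = 0 := by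
  simp only [lor, lcross]; ring

lemma isBilinearMap_lor : IsBilinearMap ℝ lor where
  add_left _ _ _ := by simp only [lor, Prod.fst_add, Prod.snd_add]; ring
  smul_left _ _ _ := by simp only [lor, Prod.smul_fst, Prod.smul_snd, smul_eq_mul]; ring
  add_right _ _ _ := by simp only [lor, Prod.fst_add, Prod.snd_add]; ring
  smul_right _ _ _ := by simp only [lor, Prod.smul_fst, Prod.smul_snd, smul_eq_mul]; ring

section LorDeriv

variable {E : Type*} [NormedAddCommGroup E] [NormedSpace ℝ E] {U V : E → R3} {p : E}

lemma DifferentiableAt.lor (hU : DifferentiableAt ℝ U p) (hV : DifferentiableAt ℝ V p) :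
    DifferentiableAt ℝ (fun q => lor (U q) (V q)) p :=
  (isBilinearMap_lor.toContinuousBilinearMap.hasFDerivAt_of_bilinear
    hU.hasFDerivAt hV.hasFDerivAt).differentiableAt

lemma fderiv_lor_apply (hU : DifferentiableAt ℝ U p) (hV : DifferentiableAt ℝ V p) (w : E) :
    fderiv ℝ (fun q => lor (U q) (V q)) p w
      = lor (fderiv ℝ U p w) (V p) + lor (U p) (fderiv ℝ V p w) := by
  change fderiv ℝ (fun q => isBilinearMap_lor.toContinuousBilinearMap (U q) (V q)) p w = _
  rw [(isBilinearMap_lor.toContinuousBilinearMap.hasFDerivAt_of_bilinear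
    hU.hasFDerivAt hV.hasFDerivAt).fderiv]
  simp [add_comm]

end LorDeriv

section PartialDeriv

variable {E F : Type*} [NormedAddCommGroup E] [NormedSpace ℝ E]
  [NormedAddCommGroup F] [NormedSpace ℝ F]

lemma fderiv_fderiv_apply {f : E → F} {p : E} (hf : DifferentiableAt ℝ (fderiv ℝ f) p)
    (v w : E) : fderiv ℝ (fun q => fderiv ℝ f q v) p w = fderiv ℝ (fderiv ℝ f) p w v := by
  rw [fderiv_clm_apply hf (differentiableAt_const v)]
  simp

variable {f : ℝ × ℝ → F} {p : ℝ × ℝ}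

lemma ContDiffAt.differentiableAt_fderiv (hf : ContDiffAt ℝ 2 f p) :
    DifferentiableAt ℝ (fderiv ℝ f) p :=
  (hf.fderiv_right (m := 1) (by norm_num)).differentiableAt one_ne_zero

lemma ContDiffAt.differentiableAt_pd1 (hf : ContDiffAt ℝ 2 f p) :
    DifferentiableAt ℝ (pd1 f) p :=
  hf.differentiableAt_fderiv.clm_apply (differentiableAt_const _)

lemma ContDiffAt.differentiableAt_pd2 (hf : ContDiffAt ℝ 2 f p) :
    DifferentiableAt ℝ (pd2 f) p :=
  hf.differentiableAt_fderiv.clm_apply (differentiableAt_const _)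

lemma ContDiffAt.pd2_pd1 (hf : ContDiffAt ℝ 2 f p) : pd2 (pd1 f) p = pd1 (pd2 f) p := by
  change fderiv ℝ (fun q => fderiv ℝ f q (1, 0)) p (0, 1)
    = fderiv ℝ (fun q => fderiv ℝ f q (0, 1)) p (1, 0)
  rw [fderiv_fderiv_apply hf.differentiableAt_fderiv,
    fderiv_fderiv_apply hf.differentiableAt_fderiv]
  exact hf.isSymmSndFDerivAt (by simp) _ _

lemma pd1_eq_deriv {u v : ℝ} (hf : DifferentiableAt ℝ f (u, v)) :
    pd1 f (u, v) = deriv (fun s => f (s, v)) u := by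
  have hline : HasDerivAt (fun s : ℝ => ((s, v) : ℝ × ℝ)) (1, 0) u :=
    (hasDerivAt_id u).prodMk (hasDerivAt_const u v)
  exact ((hf.hasFDerivAt.comp_hasDerivAt u hline).deriv).symm

end PartialDeriv

lemma differentiableAt_complex_of_cauchyRiemann {a b : ℝ × ℝ → ℝ} {z : ℂ}
    (ha : DifferentiableAt ℝ a (z.re, z.im)) (hb : DifferentiableAt ℝ b (z.re, z.im))
    (h₁ : pd1 a (z.re, z.im) = pd2 b (z.re, z.im))
    (h₂ : pd2 a (z.re, z.im) = -pd1 b (z.re, z.im)) :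
    DifferentiableAt ℂ (fun w : ℂ => (⟨a (w.re, w.im), b (w.re, w.im)⟩ : ℂ)) z := by
  have hab : HasFDerivAt (fun q => (a q, b q)) ((fderiv ℝ a (z.re, z.im)).prod
      (fderiv ℝ b (z.re, z.im))) (z.re, z.im) := ha.hasFDerivAt.prodMk hb.hasFDerivAt
  have h := (Complex.equivRealProdCLM.symm.hasFDerivAt.comp _ hab).comp z
    Complex.equivRealProdCLM.hasFDerivAt
  refine (h.complexOfReal_hasFDerivAt ?_).differentiableAt
  apply Complex.ext <;> simp [pd1, pd2] at h₁ h₂ ⊢ <;> linarith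

/-- Four times the Hopf differential `⟨ψ_z, ψ_z⟩_L`, where `ψ_z = (ψ_u − i ψ_v) / 2`. -/
def hopfDiff (ψ : ℝ × ℝ → R3) (q : ℝ × ℝ) : ℂ :=
  ⟨lor (pd1 ψ q) (pd1 ψ q) - lor (pd2 ψ q) (pd2 ψ q), -2 * lor (pd1 ψ q) (pd2 ψ q)⟩

lemma hopfDiff_eq_zero_iff {ψ : ℝ × ℝ → R3} {q : ℝ × ℝ} :
    hopfDiff ψ q = 0 ↔
      lor (pd1 ψ q) (pd1 ψ q) = lor (pd2 ψ q) (pd2 ψ q) ∧ lor (pd1 ψ q) (pd2 ψ q) = 0 := by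
  simp only [hopfDiff, Complex.ext_iff, Complex.zero_re, Complex.zero_im]
  constructor <;> rintro ⟨h₁, h₂⟩ <;> constructor <;> linarith

/-- With `E = ⟨ψ_u,ψ_u⟩ − ⟨ψ_v,ψ_v⟩` and `F = ⟨ψ_u,ψ_v⟩`, the symmetry `ψ_uv = ψ_vu` and the
orthogonality of `ψ_uu + ψ_vv` to `ψ_u`, `ψ_v` give `E_u = −2 F_v` and `E_v = 2 F_u`. -/
lemma differentiableAt_hopfDiff {ψ : ℝ × ℝ → R3} {z : ℂ} (hψ : ContDiffAt ℝ 2 ψ (z.re, z.im))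
    (hu : lor (pd1 (pd1 ψ) (z.re, z.im) + pd2 (pd2 ψ) (z.re, z.im)) (pd1 ψ (z.re, z.im)) = 0)
    (hv : lor (pd1 (pd1 ψ) (z.re, z.im) + pd2 (pd2 ψ) (z.re, z.im)) (pd2 ψ (z.re, z.im)) = 0) :
    DifferentiableAt ℂ (fun w : ℂ => hopfDiff ψ (w.re, w.im)) z := by
  set p : ℝ × ℝ := (z.re, z.im)
  have h₁ := hψ.differentiableAt_pd1
  have h₂ := hψ.differentiableAt_pd2
  have hre : ∀ w, fderiv ℝ (fun q => lor (pd1 ψ q) (pd1 ψ q) - lor (pd2 ψ q) (pd2 ψ q)) p w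
      = 2 * lor (fderiv ℝ (pd1 ψ) p w) (pd1 ψ p) - 2 * lor (fderiv ℝ (pd2 ψ) p w) (pd2 ψ p) := by
    intro w
    rw [fderiv_fun_sub (h₁.lor h₁) (h₂.lor h₂), sub_apply,
      fderiv_lor_apply h₁ h₁, fderiv_lor_apply h₂ h₂, lor_comm (pd1 ψ p), lor_comm (pd2 ψ p)]
    ring
  have him : ∀ w, fderiv ℝ (fun q => -2 * lor (pd1 ψ q) (pd2 ψ q)) p w
      = -2 * (lor (fderiv ℝ (pd1 ψ) p w) (pd2 ψ p) + lor (pd1 ψ p) (fderiv ℝ (pd2 ψ) p w)) := by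
    intro w
    rw [fderiv_const_mul (h₁.lor h₂), smul_apply, smul_eq_mul, fderiv_lor_apply h₁ h₂]
  have hsymm : pd2 (pd1 ψ) p = pd1 (pd2 ψ) p := hψ.pd2_pd1
  apply differentiableAt_complex_of_cauchyRiemann ((h₁.lor h₁).fun_sub (h₂.lor h₂))
    ((h₁.lor h₂).const_mul _)
  · change fderiv ℝ _ p (1, 0) = fderiv ℝ _ p (0, 1)
    rw [hre, him]
    change 2 * lor (pd1 (pd1 ψ) p) (pd1 ψ p) - 2 * lor (pd1 (pd2 ψ) p) (pd2 ψ p)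
      = -2 * (lor (pd2 (pd1 ψ) p) (pd2 ψ p) + lor (pd1 ψ p) (pd2 (pd2 ψ) p))
    rw [hsymm]
    simp only [lor, Prod.fst_add, Prod.snd_add] at hu ⊢
    linear_combination 2 * hu
  · change fderiv ℝ _ p (0, 1) = -fderiv ℝ _ p (1, 0)
    rw [hre, him]
    change 2 * lor (pd2 (pd1 ψ) p) (pd1 ψ p) - 2 * lor (pd2 (pd2 ψ) p) (pd2 ψ p)
      = -(-2 * (lor (pd1 (pd1 ψ) p) (pd2 ψ p) + lor (pd1 ψ p) (pd1 (pd2 ψ) p)))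
    rw [hsymm]
    simp only [lor, Prod.fst_add, Prod.snd_add] at hv ⊢
    linear_combination -2 * hv

open Topology in
lemma AnalyticOnNhd.eqOn_zero_of_ofReal_eq_zero {g : ℂ → ℂ} {U : Set ℂ}
    (hg : AnalyticOnNhd ℂ g U) (hU : IsPreconnected U) (h₀ : (0 : ℂ) ∈ U)
    (hreal : ∀ t : ℝ, g t = 0) : EqOn g 0 U := by
  have hpunct : Tendsto ((↑) : ℝ → ℂ) (𝓝[≠] 0) (𝓝[≠] 0) := by
    simpa using Complex.continuous_ofReal.continuousWithinAt.tendsto_nhdsWithin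
      (x := 0) (s := {0}ᶜ) (t := {0}ᶜ) fun t ht => by simpa using ht
  exact hg.eqOn_zero_of_preconnected_of_frequently_eq_zero hU h₀
    (hpunct.frequently (Eventually.of_forall hreal).frequently)

theorem stmt7_general (R : ℝ) (H : R3 → ℝ) (ψ : ℝ × ℝ → R3)
    (hR : 0 < R)
    (hψ : ContDiffOn ℝ 2 ψ (Strip2 R))
    (hsys : ∀ p ∈ Strip2 R,
      pd1 (pd1 ψ) p + pd2 (pd2 ψ) p = (2 * H (ψ p)) • lcross (pd1 ψ p) (pd2 ψ p))
    (h0 : ∀ u : ℝ, ψ (u, 0) = (0 : R3))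
    (hnull : ∀ u : ℝ, lor (pd2 ψ (u, 0)) (pd2 ψ (u, 0)) = 0) :
    ∀ p ∈ Strip2 R,
      lor (pd1 ψ p) (pd1 ψ p) = lor (pd2 ψ p) (pd2 ψ p) ∧
      lor (pd1 ψ p) (pd2 ψ p) = 0 := by
  have hψ₂ : ∀ q ∈ Strip2 R, ContDiffAt ℝ 2 ψ q := fun q hq =>
    hψ.contDiffAt ((isOpen_Ioo.preimage continuous_snd).mem_nhds hq)
  set S : Set ℂ := Complex.im ⁻¹' Ioo (-R) R
  have hanalytic : AnalyticOnNhd ℂ (fun w => hopfDiff ψ (w.re, w.im)) S := by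
    refine DifferentiableOn.analyticOnNhd (fun z hz => ?_)
      (isOpen_Ioo.preimage Complex.continuous_im)
    refine (differentiableAt_hopfDiff (hψ₂ _ hz) ?_ ?_).differentiableWithinAt <;>
      rw [hsys _ hz, isBilinearMap_lor.smul_left, smul_eq_mul]
    · rw [lor_lcross_left, mul_zero]
    · rw [lor_lcross_right, mul_zero]
  have haxis : ∀ t : ℝ, hopfDiff ψ (t, 0) = 0 := fun t => by
    have hψ_u : pd1 ψ (t, 0) = 0 := by
      rw [pd1_eq_deriv ((hψ₂ _ ⟨by linarith, hR⟩).differentiableAt two_ne_zero)]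
      simp [h0]
    rw [hopfDiff_eq_zero_iff, hψ_u, hnull]
    simp [lor]
  have hS : IsPreconnected S := ((convex_Ioo _ _).linear_preimage Complex.imLm).isPreconnected
  have h0S : (0 : ℂ) ∈ S := by simp [S, hR]
  intro p hp
  have hpS : (⟨p.1, p.2⟩ : ℂ) ∈ S := hp
  exact hopfDiff_eq_zero_iff.1
    (hanalytic.eqOn_zero_of_ofReal_eq_zero hS h0S (by simpa using haxis) hpS)

/-- Claim 1 in Theorem `existence`: a `C²` solution of
`ψ_uu + ψ_vv = 2ℋ(ψ) ψ_u ×_L ψ_v` on `ℝ × (−R,R)` with `ψ(u,0) = 0` and null initial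
velocity satisfies the conformality conditions everywhere. -/
theorem stmt7 (O : Set R3) (R : ℝ) (H : R3 → ℝ) (ψ : ℝ × ℝ → R3)
    (hR : 0 < R) (hO : IsOpen O) (hH : ContinuousOn H O)
    (hψO : ∀ p ∈ Strip2 R, ψ p ∈ O)
    (hψ : ContDiffOn ℝ 2 ψ (Strip2 R))
    (hsys : ∀ p ∈ Strip2 R,
      pd1 (pd1 ψ) p + pd2 (pd2 ψ) p = (2 * H (ψ p)) • lcross (pd1 ψ p) (pd2 ψ p))
    (h0 : ∀ u : ℝ, ψ (u, 0) = (0 : R3))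
    (hnull : ∀ u : ℝ, lor (pd2 ψ (u, 0)) (pd2 ψ (u, 0)) = 0) :
    ∀ p ∈ Strip2 R,
      lor (pd1 ψ p) (pd1 ψ p) = lor (pd2 ψ p) (pd2 ψ p) ∧
      lor (pd1 ψ p) (pd2 ψ p) = 0 :=
  stmt7_general R H ψ hR hψ hsys h0 hnull
end
end

section
/- Let ℋ be a positive C¹ function on an open neighborhood O of the origin of ℝ³, let A: ℝ → ℝ∖{0} be a 2π-periodic C¹ nowhere-vanishing function, and let ψ: ℝ × (−R,R) → O be a C² map, 2π-periodic in u, satisfying ψ_uu + ψ_vv = 2 ℋ(ψ) ψ_u ×_L ψ_v, ψ(u,0) = 0 and ∂_vψ(u,0) = A(u)(cos u, −sin u, 1) for all u ∈ ℝ, and satisfying the conformality conditions ⟨ψ_u,ψ_u⟩_L = ⟨ψ_v,ψ_v⟩_L and ⟨ψ_u,ψ_v⟩_L = 0 everywhere. Then there exists R' ∈ (0,R] such that on ℝ × (0,R') one has ∂_uψ₁ ∂_vψ₂ − ∂_vψ₁ ∂_uψ₂ > 0 and ⟨ψ_u,ψ_u⟩_L > 0; in particular ψ restricted to ℝ ×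 (0,R') is a spacelike immersion into 𝕃³ that is a local graph in the vertical direction. -/
noncomputable section

open Real Set Metric Filter MeasureTheory

/-!
Since `ψ(u, 0) = 0`, the field `ψ_u` vanishes on `v = 0`, so `ψ_u = v D` with
`D(u, v) = ∫₀¹ ψ_uv(u, t v) dt` continuous and `D(u, 0) = ∂_u ψ_v(u, 0)`, the derivative of the
null curve `A(u) (cos u, −sin u, 1)`. The Jacobian of `(ψ₁, ψ₂)` is the third component of
`ψ_u ×_L ψ_v`, hence equals `v (D ×_L ψ_v)₃`, and `⟨ψ_u, ψ_u⟩_L = v² ⟨D, D⟩_L`; on `v = 0` both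
`(D ×_L ψ_v)₃` and `⟨D, D⟩_L` equal `A(u)² > 0`. By continuity, `2π`-periodicity and compactness
of `[0, 2π]` they stay positive on a strip `|v| < R'`.
-/

open Topology

section PartialDerivatives

variable {E F : Type*} [NormedAddCommGroup E] [NormedSpace ℝ E]
  [NormedAddCommGroup F] [NormedSpace ℝ F] {f : ℝ × ℝ → E}

lemma hasDerivAt_pd1 {u v : ℝ} (hf : DifferentiableAt ℝ f (u, v)) :
    HasDerivAt (fun s => f (s, v)) (pd1 f (u, v)) u :=
  hf.hasFDerivAt.comp_hasDerivAt u ((hasDerivAt_id u).prodMk (hasDerivAt_const u v))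

lemma hasDerivAt_pd2 {u v : ℝ} (hf : DifferentiableAt ℝ f (u, v)) :
    HasDerivAt (fun t => f (u, t)) (pd2 f (u, v)) v :=
  hf.hasFDerivAt.comp_hasDerivAt v ((hasDerivAt_const v u).prodMk (hasDerivAt_id v))

lemma pd1_eq_zero_of_forall {u v : ℝ} (hf : DifferentiableAt ℝ f (u, v))
    (h : ∀ s, f (s, v) = 0) : pd1 f (u, v) = 0 :=
  (hasDerivAt_pd1 hf).unique (by simpa [h] using hasDerivAt_const u (0 : E))

lemma pd1_clm_comp (L : E →L[ℝ] F) {p : ℝ × ℝ} (hf : DifferentiableAt ℝ f p) :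
    pd1 (fun q => L (f q)) p = L (pd1 f p) :=
  DFunLike.congr_fun (L.hasFDerivAt.comp p hf.hasFDerivAt).fderiv _

lemma pd2_clm_comp (L : E →L[ℝ] F) {p : ℝ × ℝ} (hf : DifferentiableAt ℝ f p) :
    pd2 (fun q => L (f q)) p = L (pd2 f p) :=
  DFunLike.congr_fun (L.hasFDerivAt.comp p hf.hasFDerivAt).fderiv _

lemma pd2_pd1_eq_pd1_pd2 {p : ℝ × ℝ} (hf : ContDiffAt ℝ 2 f p) :
    pd2 (pd1 f) p = pd1 (pd2 f) p := by
  have hf' : DifferentiableAt ℝ (fderiv ℝ f) p :=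
    (hf.fderiv_right (m := 1) le_rfl).differentiableAt one_ne_zero
  calc pd2 (pd1 f) p = fderiv ℝ (fderiv ℝ f) p (0, 1) (1, 0) :=
        pd2_clm_comp (ContinuousLinearMap.apply ℝ E ((1 : ℝ), (0 : ℝ))) hf'
    _ = fderiv ℝ (fderiv ℝ f) p (1, 0) (0, 1) :=
        hf.isSymmSndFDerivAt (by simp [minSmoothness_of_isRCLikeNormedField]) _ _
    _ = pd1 (pd2 f) p :=
        (pd1_clm_comp (ContinuousLinearMap.apply ℝ E ((0 : ℝ), (1 : ℝ))) hf').symm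

lemma ContDiffOn.pd1 {s : Set (ℝ × ℝ)} {m n : WithTop ℕ∞} (hf : ContDiffOn ℝ n f s)
    (hs : IsOpen s) (hmn : m + 1 ≤ n) : ContDiffOn ℝ m (pd1 f) s :=
  (ContinuousLinearMap.apply ℝ E ((1 : ℝ), (0 : ℝ))).contDiff.comp_contDiffOn
    (hf.fderiv_of_isOpen hs hmn)

lemma ContDiffOn.pd2 {s : Set (ℝ × ℝ)} {m n : WithTop ℕ∞} (hf : ContDiffOn ℝ n f s)
    (hs : IsOpen s) (hmn : m + 1 ≤ n) : ContDiffOn ℝ m (pd2 f) s :=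
  (ContinuousLinearMap.apply ℝ E ((0 : ℝ), (1 : ℝ))).contDiff.comp_contDiffOn
    (hf.fderiv_of_isOpen hs hmn)

lemma Function.Periodic.fderiv {G : Type*} [NormedAddCommGroup G] [NormedSpace ℝ G]
    {g : G → E} {c : G} (hg : Function.Periodic g c) : Function.Periodic (fderiv ℝ g) c := by
  intro x
  rw [← fderiv_comp_add_right, show (fun y => g (y + c)) = g from funext hg]

lemma Function.Periodic.pd1 {c : ℝ × ℝ} (hf : Function.Periodic f c) :
    Function.Periodic (pd1 f) c := fun x => DFunLike.congr_fun (hf.fderiv x) _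

lemma Function.Periodic.pd2 {c : ℝ × ℝ} (hf : Function.Periodic f c) :
    Function.Periodic (pd2 f) c := fun x => DFunLike.congr_fun (hf.fderiv x) _

end PartialDerivatives

lemma isOpen_strip2 (R : ℝ) : IsOpen (Strip2 R) :=
  isOpen_Ioo.preimage continuous_snd

lemma jacobian_eq_lcross {ψ : ℝ × ℝ → R3} {p : ℝ × ℝ} (hψ : DifferentiableAt ℝ ψ p) :
    pd1 (comp1 ψ) p * pd2 (comp2 ψ) p - pd2 (comp1 ψ) p * pd1 (comp2 ψ) p
      = (lcross (pd1 ψ p) (pd2 ψ p)).2.2 := by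
  have h1 : pd1 (comp1 ψ) p = (pd1 ψ p).1 := pd1_clm_comp (ContinuousLinearMap.fst ℝ ℝ _) hψ
  have h2 : pd2 (comp1 ψ) p = (pd2 ψ p).1 := pd2_clm_comp (ContinuousLinearMap.fst ℝ ℝ _) hψ
  have h3 : pd1 (comp2 ψ) p = (pd1 ψ p).2.1 :=
    pd1_clm_comp ((ContinuousLinearMap.fst ℝ ℝ ℝ).comp (ContinuousLinearMap.snd ℝ ℝ _)) hψ
  have h4 : pd2 (comp2 ψ) p = (pd2 ψ p).2.1 :=
    pd2_clm_comp ((ContinuousLinearMap.fst ℝ ℝ ℝ).comp (ContinuousLinearMap.snd ℝ ℝ _)) hψ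
  rw [h1, h2, h3, h4, lcross]
  ring

lemma mem_strip2_iff {R : ℝ} {p : ℝ × ℝ} : p ∈ Strip2 R ↔ |p.2| < R :=
  abs_lt.symm

lemma mk_zero_mem_strip2 {R : ℝ} (hR : 0 < R) (u : ℝ) : (u, (0 : ℝ)) ∈ Strip2 R :=
  mem_strip2_iff.2 (by simpa using hR)

lemma mk_mul_mem_strip2 {R t : ℝ} {p : ℝ × ℝ} (hp : p ∈ Strip2 R) (ht : |t| ≤ 1) :
    (p.1, t * p.2) ∈ Strip2 R := by
  rw [mem_strip2_iff] at hp ⊢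
  rw [abs_mul]
  exact (mul_le_of_le_one_left (abs_nonneg _) ht).trans_lt hp

section VerticalSlope

variable {E : Type*} [NormedAddCommGroup E] [NormedSpace ℝ E] {f : ℝ × ℝ → E} {R : ℝ}

def vSlope (f : ℝ × ℝ → E) (p : ℝ × ℝ) : E :=
  ∫ t in (0 : ℝ)..1, pd2 f (p.1, t * p.2)

lemma vSlope_apply_zero [CompleteSpace E] (u : ℝ) : vSlope f (u, 0) = pd2 f (u, 0) := by
  simp [vSlope]

lemma Function.Periodic.vSlope {c : ℝ} (hf : Function.Periodic f (c, 0)) :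
    Function.Periodic (_root_.vSlope f) (c, 0) := by
  rintro ⟨u, v⟩
  simp only [_root_.vSlope, Prod.mk_add_mk, add_zero]
  congr 1
  funext t
  simpa using hf.pd2 (u, t * v)

lemma continuousOn_vSlope (hf : ContinuousOn (pd2 f) (Strip2 R)) :
    ContinuousOn (vSlope f) (Strip2 R) := by
  rw [continuousOn_iff_continuous_domRestrict]
  -- clamping `t` to `[0, 1]` makes the integrand continuous on all of `Strip2 R × ℝ`
  let c : ℝ → ℝ := fun t => projIcc 0 1 zero_le_one t
  have hc : ∀ t, |c t| ≤ 1 := fun t => abs_le.2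
    ⟨by linarith [(projIcc 0 1 zero_le_one t).2.1], (projIcc 0 1 zero_le_one t).2.2⟩
  have hg : Continuous fun x : Strip2 R × ℝ => pd2 f (x.1.1.1, c x.2 * x.1.1.2) :=
    hf.comp_continuous (by fun_prop) fun x => mk_mul_mem_strip2 x.1.2 (hc x.2)
  have hcont : Continuous fun x : Strip2 R => ∫ t in (0 : ℝ)..1, pd2 f (x.1.1, c t * x.1.2) :=
    intervalIntegral.continuous_parametric_intervalIntegral_of_continuous'
      (f := fun (x : Strip2 R) t => pd2 f (x.1.1, c t * x.1.2)) hg 0 1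
  refine hcont.congr fun x => intervalIntegral.integral_congr fun t ht => ?_
  rw [uIcc_of_le zero_le_one] at ht
  simp [c, projIcc_of_mem _ ht]

lemma eq_smul_vSlope [CompleteSpace E] (hf : ContDiffOn ℝ 1 f (Strip2 R))
    (h0 : ∀ u, f (u, 0) = 0) {p : ℝ × ℝ} (hp : p ∈ Strip2 R) : f p = p.2 • vSlope f p := by
  obtain ⟨u, v⟩ := p
  have hmem : ∀ t ∈ uIcc (0 : ℝ) 1, (u, t * v) ∈ Strip2 R := fun t ht => by
    rw [uIcc_of_le zero_le_one] at ht
    exact mk_mul_mem_strip2 hp (abs_le.2 ⟨by linarith [ht.1], ht.2⟩)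
  have hderiv : ∀ t ∈ uIcc (0 : ℝ) 1,
      HasDerivAt (fun t => f (u, t * v)) (v • pd2 f (u, t * v)) t := fun t ht => by
    have hd := (hf.differentiableOn one_ne_zero).differentiableAt
      ((isOpen_strip2 R).mem_nhds (hmem t ht))
    simpa [Function.comp_def] using (hasDerivAt_pd2 hd).scomp t ((hasDerivAt_id t).mul_const v)
  have hcont : ContinuousOn (fun t => v • pd2 f (u, t * v)) (uIcc 0 1) :=
    ((hf.pd2 (m := 0) (isOpen_strip2 R) le_rfl).continuousOn.comp (by fun_prop) hmem).const_smul v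
  have := intervalIntegral.integral_eq_sub_of_hasDerivAt hderiv hcont.intervalIntegrable
  simpa [vSlope, intervalIntegral.integral_smul, h0] using this.symm

end VerticalSlope

lemma eventually_forall_of_periodic {P : ℝ × ℝ → Prop} {T : ℝ} (hT : 0 < T)
    (hP : Function.Periodic P (T, 0)) (h : ∀ u, ∀ᶠ p in 𝓝 (u, 0), P p) :
    ∀ᶠ v in 𝓝 (0 : ℝ), ∀ u, P (u, v) := by
  have hK := (isCompact_Icc (a := 0) (b := T)).eventually_forall_of_forall_eventually (x₀ := 0)
    (P := fun v u => P (u, v)) fun u _ => (continuous_swap.tendsto (0, u)).eventually (h u)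
  filter_upwards [hK] with v hv u
  have hPv : Function.Periodic (fun u => P (u, v)) T := fun u => by simpa using hP (u, v)
  obtain ⟨u', hu', he⟩ := hPv.exists_mem_Ico₀ hT u
  exact he ▸ hv u' (Ico_subset_Icc_self hu')

lemma lor_smul_left (c : ℝ) (a b : R3) : lor (c • a) b = c * lor a b := by
  simp only [lor, Prod.smul_fst, Prod.smul_snd, smul_eq_mul]
  ring

lemma lor_smul_right (c : ℝ) (a b : R3) : lor a (c • b) = c * lor a b := by
  simp only [lor, Prod.smul_fst, Prod.smul_snd, smul_eq_mul]
  ring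

lemma lcross_smul_left (c : ℝ) (a b : R3) : lcross (c • a) b = c • lcross a b := by
  simp only [lcross, Prod.smul_fst, Prod.smul_snd, smul_eq_mul, Prod.smul_mk]
  ext <;> simp only <;> ring

def coneCurve (a : ℝ → ℝ) (u : ℝ) : R3 := (a u * cos u, -(a u * sin u), a u)

lemma lcross_lor_of_hasDerivAt_coneCurve {a : ℝ → ℝ} {b : R3} {u : ℝ}
    (h : HasDerivAt (coneCurve a) b u) :
    (lcross b (coneCurve a u)).2.2 = a u ^ 2 ∧ lor b b = a u ^ 2 := by
  let L : R3 →L[ℝ] ℝ := (ContinuousLinearMap.snd ℝ ℝ ℝ).comp (ContinuousLinearMap.snd ℝ ℝ _)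
  have ha : HasDerivAt a b.2.2 u := L.hasFDerivAt.comp_hasDerivAt u h
  have hb : b = (b.2.2 * cos u - a u * sin u, -(b.2.2 * sin u + a u * cos u), b.2.2) := by
    refine h.unique (((ha.mul (hasDerivAt_cos u)).congr_deriv ?_).prodMk
      ((ha.mul (hasDerivAt_sin u)).neg.prodMk ha))
    ring
  rw [hb]
  simp only [lcross, lor, coneCurve]
  constructor
  · linear_combination a u ^ 2 * sin_sq_add_cos_sq u
  · linear_combination (b.2.2 ^ 2 + a u ^ 2) * sin_sq_add_cos_sq u

section CauchyData

variable {R : ℝ} {A : ℝ → ℝ} {ψ : ℝ × ℝ → R3}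

lemma hasDerivAt_coneCurve_vSlope (hR : 0 < R) (hψ : ContDiffOn ℝ 2 ψ (Strip2 R))
    (hbv : ∀ u, pd2 ψ (u, 0) = coneCurve A u) (u : ℝ) :
    HasDerivAt (coneCurve A) (vSlope (pd1 ψ) (u, 0)) u := by
  have hu := (isOpen_strip2 R).mem_nhds (mk_zero_mem_strip2 hR u)
  rw [vSlope_apply_zero, pd2_pd1_eq_pd1_pd2 (hψ.contDiffAt hu)]
  have h := hasDerivAt_pd1 (((hψ.pd2 (m := 1) (isOpen_strip2 R) (by norm_num)).contDiffAt hu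
    ).differentiableAt one_ne_zero)
  rwa [show (fun s => pd2 ψ (s, 0)) = coneCurve A from funext hbv] at h

lemma eventually_forall_pos_vSlope (hR : 0 < R) (hA0 : ∀ u, A u ≠ 0)
    (hψ : ContDiffOn ℝ 2 ψ (Strip2 R)) (hP : Function.Periodic ψ (2 * π, 0))
    (hbv : ∀ u, pd2 ψ (u, 0) = coneCurve A u) :
    ∀ᶠ v in 𝓝 (0 : ℝ), ∀ u, 0 < (lcross (vSlope (pd1 ψ) (u, v)) (pd2 ψ (u, v))).2.2 ∧
      0 < lor (vSlope (pd1 ψ) (u, v)) (vSlope (pd1 ψ) (u, v)) := by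
  have hS := isOpen_strip2 R
  have hF : ContDiffOn ℝ 1 (pd2 ψ) (Strip2 R) := hψ.pd2 hS (by norm_num)
  have hDc := continuousOn_vSlope ((hψ.pd1 (m := 1) hS (by norm_num)).pd2 (m := 0) hS le_rfl
    ).continuousOn
  have hDper := hP.pd1.vSlope
  have hD0 := hasDerivAt_coneCurve_vSlope hR hψ hbv
  set D := vSlope (pd1 ψ)
  refine eventually_forall_of_periodic (P := fun p => 0 < (lcross (D p) (pd2 ψ p)).2.2 ∧
    0 < lor (D p) (D p)) two_pi_pos (fun p => by simp only [hDper p, hP.pd2 p]) fun u => ?_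
  have hu := hS.mem_nhds (mk_zero_mem_strip2 hR u)
  have hDu := hDc.continuousAt hu
  have hFu := hF.continuousOn.continuousAt hu
  obtain ⟨hj, hl⟩ := lcross_lor_of_hasDerivAt_coneCurve (hD0 u)
  rw [← hbv] at hj
  have hA2 : 0 < A u ^ 2 := sq_pos_of_ne_zero (hA0 u)
  have hj0 : 0 < (lcross (D (u, 0)) (pd2 ψ (u, 0))).2.2 := hj ▸ hA2
  have hl0 : 0 < lor (D (u, 0)) (D (u, 0)) := hl ▸ hA2
  have hcj : ContinuousAt (fun p => (lcross (D p) (pd2 ψ p)).2.2) (u, 0) := by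
    simp only [lcross]; fun_prop
  have hcl : ContinuousAt (fun p => lor (D p) (D p)) (u, 0) := by
    simp only [lor]; fun_prop
  exact (hcj.eventually (lt_mem_nhds hj0)).and (hcl.eventually (lt_mem_nhds hl0))

end CauchyData

theorem stmt8_general (R : ℝ) (A : ℝ → ℝ) (ψ : ℝ × ℝ → R3)
    (hR : 0 < R)
    (hA0 : ∀ u : ℝ, A u ≠ 0)
    (hψ : ContDiffOn ℝ 2 ψ (Strip2 R))
    (hper : ∀ u v : ℝ, ψ (u + 2 * π, v) = ψ (u, v))
    (h0 : ∀ u : ℝ, ψ (u, 0) = (0 : R3))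
    (hbv : ∀ u : ℝ, pd2 ψ (u, 0) = (A u * Real.cos u, -(A u * Real.sin u), A u)) :
    ∃ R' : ℝ, 0 < R' ∧ R' ≤ R ∧ ∀ p ∈ Strip R',
      0 < pd1 (comp1 ψ) p * pd2 (comp2 ψ) p - pd2 (comp1 ψ) p * pd1 (comp2 ψ) p ∧
      0 < lor (pd1 ψ p) (pd1 ψ p) := by
  have hS := isOpen_strip2 R
  have hψd (p) (hp : p ∈ Strip2 R) : DifferentiableAt ℝ ψ p :=
    (hψ.contDiffAt (hS.mem_nhds hp)).differentiableAt two_ne_zero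
  have hP : Function.Periodic ψ (2 * π, 0) := fun p => by simpa [Prod.add_def] using hper p.1 p.2
  have hG0 (u : ℝ) : pd1 ψ (u, 0) = 0 :=
    pd1_eq_zero_of_forall (hψd _ (mk_zero_mem_strip2 hR u)) h0
  obtain ⟨δ, hδ, hpos⟩ :=
    Metric.eventually_nhds_iff.1 (eventually_forall_pos_vSlope hR hA0 hψ hP hbv)
  refine ⟨min δ R, lt_min hδ hR, min_le_right _ _, ?_⟩
  rintro ⟨u, v⟩ ⟨hv0, hv⟩
  have hp : (u, v) ∈ Strip2 R := ⟨by linarith, hv.trans_le (min_le_right _ _)⟩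
  have hvδ : dist v 0 < δ := by
    rw [Real.dist_eq, sub_zero, abs_of_pos hv0]
    exact hv.trans_le (min_le_left _ _)
  obtain ⟨hj, hl⟩ := hpos hvδ u
  rw [jacobian_eq_lcross (hψd _ hp), eq_smul_vSlope (hψ.pd1 hS (by norm_num)) hG0 hp,
    lcross_smul_left, lor_smul_left, lor_smul_right]
  exact ⟨mul_pos hv0 hj, mul_pos hv0 (mul_pos hv0 hl)⟩

/-- Claim 2 in Theorem `existence`: shrinking `R` if necessary, the
solution of the Cauchy problem with initial null curve `A(u)(cos u, −sin u, 1)` is, on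
`ℝ × (0,R')`, a spacelike immersion which is a local graph in the vertical direction. -/
theorem stmt8 (O : Set R3) (R : ℝ) (H : R3 → ℝ) (A : ℝ → ℝ) (ψ : ℝ × ℝ → R3)
    (hR : 0 < R) (hO : IsOpen O) (h0O : ((0, 0, 0) : R3) ∈ O)
    (hH : ContDiffOn ℝ 1 H O) (hHpos : ∀ p ∈ O, 0 < H p)
    (hA : ContDiff ℝ 1 A) (hAper : ∀ u : ℝ, A (u + 2 * π) = A u)
    (hA0 : ∀ u : ℝ, A u ≠ 0)
    (hψO : ∀ p ∈ Strip2 R, ψ p ∈ O)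
    (hψ : ContDiffOn ℝ 2 ψ (Strip2 R))
    (hper : ∀ u v : ℝ, ψ (u + 2 * π, v) = ψ (u, v))
    (hsys : ∀ p ∈ Strip2 R,
      pd1 (pd1 ψ) p + pd2 (pd2 ψ) p = (2 * H (ψ p)) • lcross (pd1 ψ p) (pd2 ψ p))
    (h0 : ∀ u : ℝ, ψ (u, 0) = (0 : R3))
    (hbv : ∀ u : ℝ, pd2 ψ (u, 0) = (A u * Real.cos u, -(A u * Real.sin u), A u))
    (hconf : ∀ p ∈ Strip2 R,
      lor (pd1 ψ p) (pd1 ψ p) = lor (pd2 ψ p) (pd2 ψ p) ∧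
      lor (pd1 ψ p) (pd2 ψ p) = 0) :
    ∃ R' : ℝ, 0 < R' ∧ R' ≤ R ∧ ∀ p ∈ Strip R',
      0 < pd1 (comp1 ψ) p * pd2 (comp2 ψ) p - pd2 (comp1 ψ) p * pd1 (comp2 ψ) p ∧
      0 < lor (pd1 ψ p) (pd1 ψ p) :=
  stmt8_general R A ψ hR hA0 hψ hper h0 hbv
end
end

section
/- Let ℋ be a positive continuous function on an open set O ⊆ ℝ³, let z be an elliptic solution of the prescribed mean curvature equation for ℋ on an open set U ⊆ ℝ², and let ψ = (ψ₁,ψ₂,ψ₃): V → ℝ³ be C² on an open set V ⊆ ℝ² such that (u,v) ↦ (ψ₁,ψ₂)(u,v) is a diffeomorphism with positive Jacobian from V onto U, ψ₃ = z(ψ₁,ψ₂), and the conformality conditions ⟨ψ_u,ψ_u⟩_L = ⟨ψ_v,ψ_v⟩_L > 0 and ⟨ψ_u,ψ_v⟩_L = 0 hold on V. Writing p = z_x(ψ₁,ψ₂) and q = z_y(ψ₁,ψ₂), at every point of V where p² + q² > 0 one has the identity ∂_uu ψ₃ + ∂_vv ψ₃ = [2 ℋ(ψ) √(1 − p² − q²)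 / (p² + q²)] · ((∂_u ψ₃)² + (∂_v ψ₃)²). -/
noncomputable section

open Real Set Metric Filter MeasureTheory

/-- Auxiliary: evaluate a continuous linear map on `ℝ × ℝ` via the standard basis. -/
private lemma leval {E : Type*} [NormedAddCommGroup E] [NormedSpace ℝ E]
    (L : ℝ × ℝ →L[ℝ] E) (a b : ℝ) : L (a, b) = a • L (1, 0) + b • L (0, 1) := by
  have h : ((a, b) : ℝ × ℝ) = a • ((1 : ℝ), (0 : ℝ)) + b • ((0 : ℝ), (1 : ℝ)) := by
    simp [Prod.ext_iff]
  rw [h, map_add, _root_.map_smul, _root_.map_smul]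

private lemma leval' (L : ℝ × ℝ →L[ℝ] ℝ) (a b : ℝ) :
    L (a, b) = a * L (1, 0) + b * L (0, 1) := by
  rw [leval L a b]; simp

private lemma fderiv_mul_apply {f g : ℝ × ℝ → ℝ} {p v : ℝ × ℝ}
    (hf : DifferentiableAt ℝ f p) (hg : DifferentiableAt ℝ g p) :
    fderiv ℝ (fun q => f q * g q) p v = fderiv ℝ f p v * g p + f p * fderiv ℝ g p v := by
  rw [fderiv_fun_mul hf hg]
  simp [smul_eq_mul]
  ring

private lemma hasFDerivAt_pd {f : ℝ × ℝ → ℝ} {p : ℝ × ℝ} (hf : ContDiffAt ℝ 2 f p) (v : ℝ × ℝ) :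
    HasFDerivAt (fun q => fderiv ℝ f q v)
      ((ContinuousLinearMap.apply ℝ ℝ v).comp (fderiv ℝ (fderiv ℝ f) p)) p := by
  have h1 : ContDiffAt ℝ 1 (fderiv ℝ f) p := hf.fderiv_right (by norm_num)
  have h2 : DifferentiableAt ℝ (fderiv ℝ f) p := h1.differentiableAt one_ne_zero
  exact (ContinuousLinearMap.apply ℝ ℝ v).hasFDerivAt.comp p h2.hasFDerivAt

private lemma diff_pd {f : ℝ × ℝ → ℝ} {p : ℝ × ℝ} (hf : ContDiffAt ℝ 2 f p) (v : ℝ × ℝ) :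
    DifferentiableAt ℝ (fun q => fderiv ℝ f q v) p :=
  (hasFDerivAt_pd hf v).differentiableAt

private lemma fderiv_pd {f : ℝ × ℝ → ℝ} {p : ℝ × ℝ} (hf : ContDiffAt ℝ 2 f p) (v w : ℝ × ℝ) :
    fderiv ℝ (fun q => fderiv ℝ f q w) p v = fderiv ℝ (fderiv ℝ f) p v w := by
  rw [(hasFDerivAt_pd hf w).fderiv]; rfl

private lemma pd_symm {f : ℝ × ℝ → ℝ} {p : ℝ × ℝ} (hf : ContDiffAt ℝ 2 f p) (v w : ℝ × ℝ) :
    fderiv ℝ (fderiv ℝ f) p v w = fderiv ℝ (fderiv ℝ f) p w v := by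
  obtain ⟨u, hu, hfu⟩ := hf.contDiffOn (le_refl 2) (by simp)
  have hev : ∀ᶠ y in nhds p, HasFDerivAt f (fderiv ℝ f y) y := by
    filter_upwards [interior_mem_nhds.mpr hu] with y hy
    exact ((hfu.contDiffAt (mem_interior_iff_mem_nhds.mp hy)).differentiableAt
      (by norm_num)).hasFDerivAt
  have hx : HasFDerivAt (fderiv ℝ f) (fderiv ℝ (fderiv ℝ f) p) p :=
    (((hf.fderiv_right (m := 1) (by norm_num))).differentiableAt one_ne_zero).hasFDerivAt
  exact second_derivative_symmetric_of_eventually hev hx v w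

private lemma fderiv_fst' {E F : Type*} [NormedAddCommGroup E] [NormedSpace ℝ E]
    [NormedAddCommGroup F] [NormedSpace ℝ F]
    {f : ℝ × ℝ → E × F} {p v : ℝ × ℝ} (hf : DifferentiableAt ℝ f p) :
    fderiv ℝ (fun q => (f q).1) p v = (fderiv ℝ f p v).1 := by
  have h : HasFDerivAt (fun q => (f q).1)
      ((ContinuousLinearMap.fst ℝ E F).comp (fderiv ℝ f p)) p :=
    (ContinuousLinearMap.fst ℝ E F).hasFDerivAt.comp p hf.hasFDerivAt
  rw [h.fderiv]; rfl

private lemma fderiv_snd' {E F : Type*} [NormedAddCommGroup E] [NormedSpace ℝ E]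
    [NormedAddCommGroup F] [NormedSpace ℝ F]
    {f : ℝ × ℝ → E × F} {p v : ℝ × ℝ} (hf : DifferentiableAt ℝ f p) :
    fderiv ℝ (fun q => (f q).2) p v = (fderiv ℝ f p v).2 := by
  have h : HasFDerivAt (fun q => (f q).2)
      ((ContinuousLinearMap.snd ℝ E F).comp (fderiv ℝ f p)) p :=
    (ContinuousLinearMap.snd ℝ E F).hasFDerivAt.comp p hf.hasFDerivAt
  rw [h.fderiv]; rfl

private lemma fderiv_lor3 {A B C D E F : ℝ × ℝ → ℝ} {p v : ℝ × ℝ}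
    (hA : DifferentiableAt ℝ A p) (hB : DifferentiableAt ℝ B p) (hC : DifferentiableAt ℝ C p)
    (hD : DifferentiableAt ℝ D p) (hE : DifferentiableAt ℝ E p) (hF : DifferentiableAt ℝ F p) :
    fderiv ℝ (fun q => A q * B q + C q * D q - E q * F q) p v
      = fderiv ℝ A p v * B p + A p * fderiv ℝ B p v
        + (fderiv ℝ C p v * D p + C p * fderiv ℝ D p v)
        - (fderiv ℝ E p v * F p + E p * fderiv ℝ F p v) := by
  rw [fderiv_fun_sub ((hA.fun_mul hB).fun_add (hC.fun_mul hD)) (hE.fun_mul hF)]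
  rw [ContinuousLinearMap.sub_apply]
  rw [fderiv_fun_add (hA.fun_mul hB) (hC.fun_mul hD), ContinuousLinearMap.add_apply]
  rw [fderiv_mul_apply hA hB, fderiv_mul_apply hC hD, fderiv_mul_apply hE hF]

/-- Derivative of the quadratic combination of first partial derivatives. -/
private lemma fderiv_quad {x y w : ℝ × ℝ → ℝ} {p₀ : ℝ × ℝ}
    (hx : ContDiffAt ℝ 2 x p₀) (hy : ContDiffAt ℝ 2 y p₀) (hw : ContDiffAt ℝ 2 w p₀)
    (v a b : ℝ × ℝ) :
    fderiv ℝ (fun q => fderiv ℝ x q a * fderiv ℝ x q b + fderiv ℝ y q a * fderiv ℝ y q b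
        - fderiv ℝ w q a * fderiv ℝ w q b) p₀ v
      = fderiv ℝ (fderiv ℝ x) p₀ v a * fderiv ℝ x p₀ b
          + fderiv ℝ x p₀ a * fderiv ℝ (fderiv ℝ x) p₀ v b
        + (fderiv ℝ (fderiv ℝ y) p₀ v a * fderiv ℝ y p₀ b
          + fderiv ℝ y p₀ a * fderiv ℝ (fderiv ℝ y) p₀ v b)
        - (fderiv ℝ (fderiv ℝ w) p₀ v a * fderiv ℝ w p₀ b
          + fderiv ℝ w p₀ a * fderiv ℝ (fderiv ℝ w) p₀ v b) := by
  have h := fderiv_lor3 (v := v) (diff_pd hx a) (diff_pd hx b) (diff_pd hy a) (diff_pd hy b)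
    (diff_pd hw a) (diff_pd hw b)
  rw [h]
  simp only [fderiv_pd hx v a, fderiv_pd hx v b, fderiv_pd hy v a, fderiv_pd hy v b,
    fderiv_pd hw v a, fderiv_pd hw v b]

/-- Chain rule for a first partial of `z` composed with a map into the plane. -/
private lemma fderiv_pdz_comp {z : ℝ × ℝ → ℝ} {Pi : ℝ × ℝ → ℝ × ℝ} {p₀ v : ℝ × ℝ} {a b : ℝ}
    (hz2 : ContDiffAt ℝ 2 z (Pi p₀)) (hPi : DifferentiableAt ℝ Pi p₀)
    (hab : fderiv ℝ Pi p₀ v = (a, b)) (w : ℝ × ℝ) :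
    fderiv ℝ (fun q => fderiv ℝ z (Pi q) w) p₀ v
      = a * fderiv ℝ (fderiv ℝ z) (Pi p₀) (1, 0) w
        + b * fderiv ℝ (fderiv ℝ z) (Pi p₀) (0, 1) w := by
  have h := (hasFDerivAt_pd hz2 w).comp p₀ hPi.hasFDerivAt
  have h2 : HasFDerivAt (fun q => fderiv ℝ z (Pi q) w)
      (((ContinuousLinearMap.apply ℝ ℝ w).comp (fderiv ℝ (fderiv ℝ z) (Pi p₀))).comp
        (fderiv ℝ Pi p₀)) p₀ := h
  rw [h2.fderiv, ContinuousLinearMap.comp_apply, ContinuousLinearMap.comp_apply, hab, leval]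
  simp

/-- Derivative of the chain-rule expression for the third component. -/
private lemma fderiv_w2 {X Y : ℝ × ℝ → ℝ} {z : ℝ × ℝ → ℝ} {Pi : ℝ × ℝ → ℝ × ℝ}
    {p₀ v : ℝ × ℝ} {a b : ℝ}
    (hX : ContDiffAt ℝ 2 X p₀) (hY : ContDiffAt ℝ 2 Y p₀)
    (hz2 : ContDiffAt ℝ 2 z (Pi p₀)) (hPi : DifferentiableAt ℝ Pi p₀)
    (hab : fderiv ℝ Pi p₀ v = (a, b)) (w : ℝ × ℝ) :
    fderiv ℝ (fun q => fderiv ℝ X q w * fderiv ℝ z (Pi q) (1, 0)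
        + fderiv ℝ Y q w * fderiv ℝ z (Pi q) (0, 1)) p₀ v
      = fderiv ℝ (fderiv ℝ X) p₀ v w * fderiv ℝ z (Pi p₀) (1, 0)
          + fderiv ℝ X p₀ w * (a * fderiv ℝ (fderiv ℝ z) (Pi p₀) (1, 0) (1, 0)
            + b * fderiv ℝ (fderiv ℝ z) (Pi p₀) (0, 1) (1, 0))
        + (fderiv ℝ (fderiv ℝ Y) p₀ v w * fderiv ℝ z (Pi p₀) (0, 1)
          + fderiv ℝ Y p₀ w * (a * fderiv ℝ (fderiv ℝ z) (Pi p₀) (1, 0) (0, 1)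
            + b * fderiv ℝ (fderiv ℝ z) (Pi p₀) (0, 1) (0, 1))) := by
  have d1 : DifferentiableAt ℝ (fun q => fderiv ℝ X q w) p₀ := diff_pd hX w
  have d2 : DifferentiableAt ℝ (fun q => fderiv ℝ z (Pi q) (1, 0)) p₀ :=
    (diff_pd hz2 (1, 0)).comp p₀ hPi
  have d3 : DifferentiableAt ℝ (fun q => fderiv ℝ Y q w) p₀ := diff_pd hY w
  have d4 : DifferentiableAt ℝ (fun q => fderiv ℝ z (Pi q) (0, 1)) p₀ :=
    (diff_pd hz2 (0, 1)).comp p₀ hPi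
  rw [fderiv_fun_add (d1.fun_mul d2) (d3.fun_mul d4), ContinuousLinearMap.add_apply,
    fderiv_mul_apply d1 d2, fderiv_mul_apply d3 d4, fderiv_pd hX v w, fderiv_pd hY v w,
    fderiv_pdz_comp hz2 hPi hab ((1:ℝ), (0:ℝ)), fderiv_pdz_comp hz2 hPi hab ((0:ℝ), (1:ℝ))]

private lemma conf_decomp (a1 a2 b1 b2 p q w1 w2 : ℝ)
    (hw1 : w1 = p * a1 + q * a2) (hw2 : w2 = p * b1 + q * b2)
    (hA1 : a1 * a1 + a2 * a2 - w1 * w1 = b1 * b1 + b2 * b2 - w2 * w2)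
    (hA2 : a1 * b1 + a2 * b2 - w1 * w2 = 0)
    (hlam : 0 < a1 * a1 + a2 * a2 - w1 * w1) :
    ∃ k : ℝ, b1 = k * (p * q * a1 - (1 - q ^ 2) * a2)
      ∧ b2 = k * ((1 - p ^ 2) * a1 - p * q * a2)
      ∧ k ^ 2 * (1 - p ^ 2 - q ^ 2) = 1 := by
  subst hw1 hw2
  set c1 : ℝ := a1 - p * (p * a1 + q * a2) with hc1
  set c2 : ℝ := a2 - q * (p * a1 + q * a2) with hc2
  have hlc : a1 * c1 + a2 * c2 = a1 * a1 + a2 * a2 - (p * a1 + q * a2) * (p * a1 + q * a2) := by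
    rw [hc1, hc2]; ring
  have hcpos : 0 < c1 ^ 2 + c2 ^ 2 := by
    nlinarith [sq_nonneg (a1 * c2 - a2 * c1), sq_nonneg a1, sq_nonneg a2, hlam, hlc,
      sq_nonneg c1, sq_nonneg c2, sq_nonneg (a1 * c1 + a2 * c2)]
  have hbc : b1 * c1 + b2 * c2 = 0 := by
    rw [hc1, hc2]; linear_combination hA2
  set k : ℝ := (b2 * c1 - b1 * c2) / (c1 ^ 2 + c2 ^ 2) with hk
  have hb1 : b1 = k * (p * q * a1 - (1 - q ^ 2) * a2) := by
    rw [hk, div_mul_eq_mul_div, eq_div_iff hcpos.ne']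
    rw [hc1, hc2] at hbc ⊢
    linear_combination (a1 - p * (p * a1 + q * a2)) * hbc
  have hb2 : b2 = k * ((1 - p ^ 2) * a1 - p * q * a2) := by
    rw [hk, div_mul_eq_mul_div, eq_div_iff hcpos.ne']
    rw [hc1, hc2] at hbc ⊢
    linear_combination (a2 - q * (p * a1 + q * a2)) * hbc
  refine ⟨k, hb1, hb2, ?_⟩
  rw [hb1, hb2] at hA1
  have h0 : (k ^ 2 * (1 - p ^ 2 - q ^ 2) - 1)
      * (a1 * a1 + a2 * a2 - (p * a1 + q * a2) * (p * a1 + q * a2)) = 0 := by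
    linear_combination - hA1
  rcases mul_eq_zero.mp h0 with h | h
  · linarith [sub_eq_zero.mp h]
  · exfalso; linarith

private lemma key_ids (a1 a2 b1 b2 p q k : ℝ)
    (hb1 : b1 = k * (p * q * a1 - (1 - q ^ 2) * a2))
    (hb2 : b2 = k * ((1 - p ^ 2) * a1 - p * q * a2))
    (hk : k ^ 2 * (1 - p ^ 2 - q ^ 2) = 1) :
    (a1 ^ 2 + b1 ^ 2) * (p ^ 2 + q ^ 2)
        = (1 - q ^ 2) * ((p * a1 + q * a2) ^ 2 + (p * b1 + q * b2) ^ 2)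
      ∧ (a1 * a2 + b1 * b2) * (p ^ 2 + q ^ 2)
        = p * q * ((p * a1 + q * a2) ^ 2 + (p * b1 + q * b2) ^ 2)
      ∧ (a2 ^ 2 + b2 ^ 2) * (p ^ 2 + q ^ 2)
        = (1 - p ^ 2) * ((p * a1 + q * a2) ^ 2 + (p * b1 + q * b2) ^ 2) := by
  subst hb1 hb2
  refine ⟨?_, ?_, ?_⟩
  · linear_combination (-a1^2*p^2*q^2 - 2*a1*a2*p*q^3 - a2^2*q^4 - a1^2*q^2 + 2*a1*a2*p*q
      + a2^2*q^2) * hk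
  · linear_combination (a1^2*p^3*q + 2*a1*a2*p^2*q^2 + a2^2*p*q^3 - a1*a2*p^2
      - a1*a2*q^2) * hk
  · linear_combination (-a1^2*p^4 - 2*a1*a2*p^3*q - a2^2*p^2*q^2 + a1^2*p^2 + 2*a1*a2*p*q
      - a2^2*p^2) * hk
/-- The final algebraic computation at a single point. -/
private lemma final_alg (xu xv yu yv wu wv xuu xvu xvv yuu yvu yvv wuu wvu wvv p q r s t h : ℝ)
    (hwu : wu = xu * p + yu * q) (hwv : wv = xv * p + yv * q)
    (hwuu : wuu = xuu * p + xu * (xu * r + yu * s) + (yuu * q + yu * (xu * s + yu * t)))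
    (hwvv : wvv = xvv * p + xv * (xv * r + yv * s) + (yvv * q + yv * (xv * s + yv * t)))
    (hR1u : xuu * xu + xu * xuu + (yuu * yu + yu * yuu) - (wuu * wu + wu * wuu)
      = xvu * xv + xv * xvu + (yvu * yv + yv * yvu) - (wvu * wv + wv * wvu))
    (hR1v : xvu * xu + xu * xvu + (yvu * yu + yu * yvu) - (wvu * wu + wu * wvu)
      = xvv * xv + xv * xvv + (yvv * yv + yv * yvv) - (wvv * wv + wv * wvv))
    (hR2u : xuu * xv + xu * xvu + (yuu * yv + yu * yvu) - (wuu * wv + wu * wvu) = 0)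
    (hR2v : xvu * xv + xu * xvv + (yvu * yv + yu * yvv) - (wvu * wv + wu * wvv) = 0)
    (hC1 : xu * xu + yu * yu - wu * wu = xv * xv + yv * yv - wv * wv)
    (hC2 : xu * xv + yu * yv - wu * wv = 0)
    (hlam : 0 < xu * xu + yu * yu - wu * wu)
    (hJ : 0 < xu * yv - xv * yu)
    (hpde : (1 - q ^ 2) * r + 2 * p * q * s + (1 - p ^ 2) * t
      = 2 * h * (1 - p ^ 2 - q ^ 2) ^ ((3 : ℝ) / 2))
    (hm : 0 < p ^ 2 + q ^ 2) (he : p ^ 2 + q ^ 2 < 1) :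
    wuu + wvv = 2 * h * Real.sqrt (1 - p ^ 2 - q ^ 2) / (p ^ 2 + q ^ 2) * (wu ^ 2 + wv ^ 2) := by
  have hD : 0 < 1 - p ^ 2 - q ^ 2 := by linarith
  have hE1 : xu * (xuu + xvv) + yu * (yuu + yvv) - wu * (wuu + wvv) = 0 := by
    linear_combination ((1 : ℝ) / 2) * hR1u + hR2v
  have hE2 : xv * (xuu + xvv) + yv * (yuu + yvv) - wv * (wuu + wvv) = 0 := by
    linear_combination hR2u - ((1 : ℝ) / 2) * hR1v
  have h6 : ((xuu + xvv) - p * (wuu + wvv)) * (xu * yv - xv * yu) = 0 := by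
    linear_combination yv * hE1 - yu * hE2 + ((wuu + wvv) * yv) * hwu - ((wuu + wvv) * yu) * hwv
  have h7 : ((yuu + yvv) - q * (wuu + wvv)) * (xu * yv - xv * yu) = 0 := by
    linear_combination xu * hE2 - xv * hE1 - ((wuu + wvv) * xv) * hwu + ((wuu + wvv) * xu) * hwv
  have hX' : xuu + xvv = p * (wuu + wvv) := by
    rcases mul_eq_zero.mp h6 with h | h
    · linarith [sub_eq_zero.mp h]
    · exact absurd h hJ.ne'
  have hY' : yuu + yvv = q * (wuu + wvv) := by
    rcases mul_eq_zero.mp h7 with h | h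
    · linarith [sub_eq_zero.mp h]
    · exact absurd h hJ.ne'
  have hW : (wuu + wvv) * (1 - p ^ 2 - q ^ 2)
      = r * (xu * xu + xv * xv) + s * (2 * (xu * yu + xv * yv)) + t * (yu * yu + yv * yv) := by
    linear_combination hwuu + hwvv + p * hX' + q * hY'
  obtain ⟨k, hb1, hb2, hk⟩ := conf_decomp xu yu xv yv p q wu wv
    (by linear_combination hwu) (by linear_combination hwv) hC1 hC2 hlam
  obtain ⟨hi, hii, hiii⟩ := key_ids xu yu xv yv p q k hb1 hb2 hk
  have hT : (p * xu + q * yu) ^ 2 + (p * xv + q * yv) ^ 2 = wu ^ 2 + wv ^ 2 := by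
    rw [hwu, hwv]; ring
  rw [hT] at hi hii hiii
  have hrpow : (1 - p ^ 2 - q ^ 2) ^ ((3 : ℝ) / 2)
      = (1 - p ^ 2 - q ^ 2) * Real.sqrt (1 - p ^ 2 - q ^ 2) := by
    rw [show ((3 : ℝ) / 2) = 1 + 1 / 2 by norm_num, Real.rpow_add hD, Real.rpow_one,
      ← Real.sqrt_eq_rpow]
  rw [hrpow] at hpde
  have hfin : (wuu + wvv) * ((p ^ 2 + q ^ 2) * (1 - p ^ 2 - q ^ 2))
      = (2 * h * Real.sqrt (1 - p ^ 2 - q ^ 2) * (wu ^ 2 + wv ^ 2)) * (1 - p ^ 2 - q ^ 2) := by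
    linear_combination (p ^ 2 + q ^ 2) * hW + r * hi + 2 * s * hii + t * hiii
      + (wu ^ 2 + wv ^ 2) * hpde
  have hfin2 : (wuu + wvv) * (p ^ 2 + q ^ 2)
      = 2 * h * Real.sqrt (1 - p ^ 2 - q ^ 2) * (wu ^ 2 + wv ^ 2) := by
    apply mul_right_cancel₀ hD.ne'
    linear_combination hfin
  rw [div_mul_eq_mul_div, eq_div_iff hm.ne']
  linear_combination hfin2

/-- equation (4.2) of the paper: in a conformal parametrization of the
graph of an elliptic solution `z`, wherever `p² + q² > 0` one has
`Δψ₃ = [2ℋ(ψ)√(1−p²−q²)/(p²+q²)] · (|∂_uψ₃|² + |∂_vψ₃|²)`. -/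
theorem stmt13 (O : Set R3) (U V : Set (ℝ × ℝ)) (H : R3 → ℝ)
    (z : ℝ × ℝ → ℝ) (ψ : ℝ × ℝ → R3)
    (hO : IsOpen O) (hU : IsOpen U) (hV : IsOpen V)
    (hH : ContinuousOn H O) (hHpos : ∀ p ∈ O, 0 < H p)
    (hz : IsEllSol H O U z)
    (hψ : ContDiffOn ℝ 2 ψ V)
    (hinj : InjOn (Pi2 ψ) V) (him : Pi2 ψ '' V = U)
    (hjac : ∀ p ∈ V,
      0 < pd1 (comp1 ψ) p * pd2 (comp2 ψ) p - pd2 (comp1 ψ) p * pd1 (comp2 ψ) p)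
    (hgraph : ∀ p ∈ V, comp3 ψ p = z (Pi2 ψ p))
    (hconf : ∀ p ∈ V,
      lor (pd1 ψ p) (pd1 ψ p) = lor (pd2 ψ p) (pd2 ψ p) ∧
      0 < lor (pd1 ψ p) (pd1 ψ p) ∧
      lor (pd1 ψ p) (pd2 ψ p) = 0) :
    ∀ p ∈ V, 0 < (zx z (Pi2 ψ p)) ^ 2 + (zy z (Pi2 ψ p)) ^ 2 →
      pd1 (pd1 (comp3 ψ)) p + pd2 (pd2 (comp3 ψ)) p
        = (2 * H (ψ p) *
            Real.sqrt (1 - (zx z (Pi2 ψ p)) ^ 2 - (zy z (Pi2 ψ p)) ^ 2)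
            / ((zx z (Pi2 ψ p)) ^ 2 + (zy z (Pi2 ψ p)) ^ 2))
          * ((pd1 (comp3 ψ) p) ^ 2 + (pd2 (comp3 ψ) p) ^ 2) := by
  intro p₀ hp₀ hpq
  obtain ⟨hzC, hgr, hell, hpdeAll⟩ := hz
  have hPU : ∀ p ∈ V, Pi2 ψ p ∈ U := fun p hp => him ▸ Set.mem_image_of_mem (Pi2 ψ) hp
  have hψat : ∀ p ∈ V, ContDiffAt ℝ 2 ψ p := fun p hp => hψ.contDiffAt (hV.mem_nhds hp)
  have hψd : ∀ p ∈ V, DifferentiableAt ℝ ψ p :=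
    fun p hp => (hψat p hp).differentiableAt (by norm_num)
  have hxd : ∀ p ∈ V, DifferentiableAt ℝ (comp1 ψ) p := fun p hp => (hψd p hp).fst
  have hyd : ∀ p ∈ V, DifferentiableAt ℝ (comp2 ψ) p := fun p hp => (hψd p hp).snd.fst
  have hwd : ∀ p ∈ V, DifferentiableAt ℝ (comp3 ψ) p := fun p hp => (hψd p hp).snd.snd
  have hPid : ∀ p ∈ V, DifferentiableAt ℝ (Pi2 ψ) p :=
    fun p hp => DifferentiableAt.prodMk (hxd p hp) (hyd p hp)
  have hzd : ∀ p ∈ V, DifferentiableAt ℝ z (Pi2 ψ p) :=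
    fun p hp => (hzC.contDiffAt (hU.mem_nhds (hPU p hp))).differentiableAt (by norm_num)
  have hx2 : ContDiffAt ℝ 2 (comp1 ψ) p₀ :=
    (contDiff_fst.contDiffAt).comp p₀ (hψat p₀ hp₀)
  have hy2 : ContDiffAt ℝ 2 (comp2 ψ) p₀ :=
    ((contDiff_fst.comp contDiff_snd).contDiffAt).comp p₀ (hψat p₀ hp₀)
  have hw2 : ContDiffAt ℝ 2 (comp3 ψ) p₀ :=
    ((contDiff_snd.comp contDiff_snd).contDiffAt).comp p₀ (hψat p₀ hp₀)
  have hz2 : ContDiffAt ℝ 2 z (Pi2 ψ p₀) := hzC.contDiffAt (hU.mem_nhds (hPU p₀ hp₀))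
  -- components of the derivative of Pi2 ψ
  have hPiv : ∀ p ∈ V, ∀ v : ℝ × ℝ, fderiv ℝ (Pi2 ψ) p v
      = (fderiv ℝ (comp1 ψ) p v, fderiv ℝ (comp2 ψ) p v) := by
    intro p hp v
    have a1 : fderiv ℝ (fun q => ((Pi2 ψ) q).1) p v = (fderiv ℝ (Pi2 ψ) p v).1 :=
      fderiv_fst' (hPid p hp)
    have a2 : fderiv ℝ (fun q => ((Pi2 ψ) q).2) p v = (fderiv ℝ (Pi2 ψ) p v).2 :=
      fderiv_snd' (hPid p hp)
    exact Prod.ext_iff.mpr ⟨a1.symm, a2.symm⟩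
  -- components of the derivative of ψ
  have hψv : ∀ p ∈ V, (pd1 ψ p = (fderiv ℝ (comp1 ψ) p (1, 0), fderiv ℝ (comp2 ψ) p (1, 0),
        fderiv ℝ (comp3 ψ) p (1, 0)))
      ∧ (pd2 ψ p = (fderiv ℝ (comp1 ψ) p (0, 1), fderiv ℝ (comp2 ψ) p (0, 1),
        fderiv ℝ (comp3 ψ) p (0, 1))) := by
    intro p hp
    constructor <;>
    · refine Prod.ext_iff.mpr ⟨?_, Prod.ext_iff.mpr ⟨?_, ?_⟩⟩
      · exact (fderiv_fst' (hψd p hp)).symm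
      · show (fderiv ℝ ψ p _).2.1 = _
        rw [← fderiv_snd' (hψd p hp)]
        exact (fderiv_fst' (hψd p hp).snd).symm
      · show (fderiv ℝ ψ p _).2.2 = _
        rw [← fderiv_snd' (hψd p hp)]
        exact (fderiv_snd' (hψd p hp).snd).symm
  -- scalar form of the conformality relations
  have hconfS : ∀ p ∈ V,
      (fderiv ℝ (comp1 ψ) p (1, 0) * fderiv ℝ (comp1 ψ) p (1, 0)
          + fderiv ℝ (comp2 ψ) p (1, 0) * fderiv ℝ (comp2 ψ) p (1, 0)
          - fderiv ℝ (comp3 ψ) p (1, 0) * fderiv ℝ (comp3 ψ) p (1, 0)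
        = fderiv ℝ (comp1 ψ) p (0, 1) * fderiv ℝ (comp1 ψ) p (0, 1)
          + fderiv ℝ (comp2 ψ) p (0, 1) * fderiv ℝ (comp2 ψ) p (0, 1)
          - fderiv ℝ (comp3 ψ) p (0, 1) * fderiv ℝ (comp3 ψ) p (0, 1))
      ∧ (fderiv ℝ (comp1 ψ) p (1, 0) * fderiv ℝ (comp1 ψ) p (0, 1)
          + fderiv ℝ (comp2 ψ) p (1, 0) * fderiv ℝ (comp2 ψ) p (0, 1)
          - fderiv ℝ (comp3 ψ) p (1, 0) * fderiv ℝ (comp3 ψ) p (0, 1) = 0)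
      ∧ 0 < fderiv ℝ (comp1 ψ) p (1, 0) * fderiv ℝ (comp1 ψ) p (1, 0)
          + fderiv ℝ (comp2 ψ) p (1, 0) * fderiv ℝ (comp2 ψ) p (1, 0)
          - fderiv ℝ (comp3 ψ) p (1, 0) * fderiv ℝ (comp3 ψ) p (1, 0) := by
    intro p hp
    obtain ⟨h1, h2, h3⟩ := hconf p hp
    rw [(hψv p hp).1] at h1 h2 h3
    rw [(hψv p hp).2] at h1 h3
    exact ⟨by simpa [lor] using h1, by simpa [lor] using h3, by simpa [lor] using h2⟩
  -- chain rule for the first derivatives of the third component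
  have hB : ∀ p ∈ V, ∀ v : ℝ × ℝ,
      fderiv ℝ (comp3 ψ) p v
        = fderiv ℝ (comp1 ψ) p v * fderiv ℝ z (Pi2 ψ p) (1, 0)
          + fderiv ℝ (comp2 ψ) p v * fderiv ℝ z (Pi2 ψ p) (0, 1) := by
    intro p hp v
    have hev : comp3 ψ =ᶠ[nhds p] fun q => z (Pi2 ψ q) := by
      filter_upwards [hV.mem_nhds hp] with q hq using hgraph q hq
    have hcomp : HasFDerivAt (fun q => z (Pi2 ψ q))
        ((fderiv ℝ z (Pi2 ψ p)).comp (fderiv ℝ (Pi2 ψ) p)) p :=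
      (hzd p hp).hasFDerivAt.comp p (hPid p hp).hasFDerivAt
    rw [hev.fderiv_eq, hcomp.fderiv, ContinuousLinearMap.comp_apply, hPiv p hp v, leval']
  -- the two second derivatives of the third component (chain rule)
  have hev1 : (fun q => fderiv ℝ (comp3 ψ) q (1, 0)) =ᶠ[nhds p₀]
      (fun q => fderiv ℝ (comp1 ψ) q (1, 0) * fderiv ℝ z (Pi2 ψ q) (1, 0)
        + fderiv ℝ (comp2 ψ) q (1, 0) * fderiv ℝ z (Pi2 ψ q) (0, 1)) := by
    filter_upwards [hV.mem_nhds hp₀] with q hq using hB q hq (1, 0)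
  have hev2 : (fun q => fderiv ℝ (comp3 ψ) q (0, 1)) =ᶠ[nhds p₀]
      (fun q => fderiv ℝ (comp1 ψ) q (0, 1) * fderiv ℝ z (Pi2 ψ q) (1, 0)
        + fderiv ℝ (comp2 ψ) q (0, 1) * fderiv ℝ z (Pi2 ψ q) (0, 1)) := by
    filter_upwards [hV.mem_nhds hp₀] with q hq using hB q hq (0, 1)
  have hwuu := DFunLike.congr_fun (hev1.fderiv_eq (𝕜 := ℝ)) ((1 : ℝ), (0 : ℝ))
  have hwvv := DFunLike.congr_fun (hev2.fderiv_eq (𝕜 := ℝ)) ((0 : ℝ), (1 : ℝ))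
  rw [fderiv_w2 hx2 hy2 hz2 (hPid p₀ hp₀) (hPiv p₀ hp₀ (1, 0)) ((1 : ℝ), (0 : ℝ)),
    pd_symm hz2 ((1 : ℝ), (0 : ℝ)) ((0 : ℝ), (1 : ℝ))] at hwuu
  rw [fderiv_w2 hx2 hy2 hz2 (hPid p₀ hp₀) (hPiv p₀ hp₀ (0, 1)) ((0 : ℝ), (1 : ℝ)),
    pd_symm hz2 ((1 : ℝ), (0 : ℝ)) ((0 : ℝ), (1 : ℝ))] at hwvv
  -- derivatives of the conformality relations
  have hEG : (fun q => fderiv ℝ (comp1 ψ) q (1, 0) * fderiv ℝ (comp1 ψ) q (1, 0)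
        + fderiv ℝ (comp2 ψ) q (1, 0) * fderiv ℝ (comp2 ψ) q (1, 0)
        - fderiv ℝ (comp3 ψ) q (1, 0) * fderiv ℝ (comp3 ψ) q (1, 0)) =ᶠ[nhds p₀]
      (fun q => fderiv ℝ (comp1 ψ) q (0, 1) * fderiv ℝ (comp1 ψ) q (0, 1)
        + fderiv ℝ (comp2 ψ) q (0, 1) * fderiv ℝ (comp2 ψ) q (0, 1)
        - fderiv ℝ (comp3 ψ) q (0, 1) * fderiv ℝ (comp3 ψ) q (0, 1)) := by
    filter_upwards [hV.mem_nhds hp₀] with q hq using (hconfS q hq).1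
  have hF0 : (fun q => fderiv ℝ (comp1 ψ) q (1, 0) * fderiv ℝ (comp1 ψ) q (0, 1)
        + fderiv ℝ (comp2 ψ) q (1, 0) * fderiv ℝ (comp2 ψ) q (0, 1)
        - fderiv ℝ (comp3 ψ) q (1, 0) * fderiv ℝ (comp3 ψ) q (0, 1)) =ᶠ[nhds p₀]
      (fun _ => (0 : ℝ)) := by
    filter_upwards [hV.mem_nhds hp₀] with q hq using (hconfS q hq).2.1
  have hR1u := DFunLike.congr_fun (hEG.fderiv_eq (𝕜 := ℝ)) ((1 : ℝ), (0 : ℝ))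
  have hR1v := DFunLike.congr_fun (hEG.fderiv_eq (𝕜 := ℝ)) ((0 : ℝ), (1 : ℝ))
  have hR2u := DFunLike.congr_fun (hF0.fderiv_eq (𝕜 := ℝ)) ((1 : ℝ), (0 : ℝ))
  have hR2v := DFunLike.congr_fun (hF0.fderiv_eq (𝕜 := ℝ)) ((0 : ℝ), (1 : ℝ))
  rw [fderiv_quad hx2 hy2 hw2 (1, 0) (1, 0) (1, 0),
    fderiv_quad hx2 hy2 hw2 (1, 0) (0, 1) (0, 1),
    pd_symm hx2 ((1 : ℝ), (0 : ℝ)) ((0 : ℝ), (1 : ℝ)),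
    pd_symm hy2 ((1 : ℝ), (0 : ℝ)) ((0 : ℝ), (1 : ℝ)),
    pd_symm hw2 ((1 : ℝ), (0 : ℝ)) ((0 : ℝ), (1 : ℝ))] at hR1u
  rw [fderiv_quad hx2 hy2 hw2 (0, 1) (1, 0) (1, 0),
    fderiv_quad hx2 hy2 hw2 (0, 1) (0, 1) (0, 1)] at hR1v
  rw [fderiv_quad hx2 hy2 hw2 (1, 0) (1, 0) (0, 1), fderiv_const_apply,
    ContinuousLinearMap.zero_apply,
    pd_symm hx2 ((1 : ℝ), (0 : ℝ)) ((0 : ℝ), (1 : ℝ)),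
    pd_symm hy2 ((1 : ℝ), (0 : ℝ)) ((0 : ℝ), (1 : ℝ)),
    pd_symm hw2 ((1 : ℝ), (0 : ℝ)) ((0 : ℝ), (1 : ℝ))] at hR2u
  rw [fderiv_quad hx2 hy2 hw2 (0, 1) (1, 0) (0, 1), fderiv_const_apply,
    ContinuousLinearMap.zero_apply] at hR2v
  -- the prescribed mean curvature equation at the image point
  have hψp₀ : (((Pi2 ψ p₀).1, (Pi2 ψ p₀).2, z (Pi2 ψ p₀)) : R3) = ψ p₀ :=
    Prod.ext_iff.mpr ⟨rfl, Prod.ext_iff.mpr ⟨rfl, (hgraph p₀ hp₀).symm⟩⟩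
  have hzxx : zxx z (Pi2 ψ p₀) = fderiv ℝ (fderiv ℝ z) (Pi2 ψ p₀) (1, 0) (1, 0) :=
    fderiv_pd hz2 (1, 0) (1, 0)
  have hzxy : zxy z (Pi2 ψ p₀) = fderiv ℝ (fderiv ℝ z) (Pi2 ψ p₀) (0, 1) (1, 0) :=
    fderiv_pd hz2 (0, 1) (1, 0)
  have hzyy : zyy z (Pi2 ψ p₀) = fderiv ℝ (fderiv ℝ z) (Pi2 ψ p₀) (0, 1) (0, 1) :=
    fderiv_pd hz2 (0, 1) (0, 1)
  have hpde' := hpdeAll (Pi2 ψ p₀) (hPU p₀ hp₀)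
  rw [hzxx, hzxy, hzyy, hψp₀] at hpde'
  -- conformality at p₀ and the conclusion
  obtain ⟨hC1, hC2, hlam⟩ := hconfS p₀ hp₀
  rw [fderiv_pd hw2 (1, 0) (1, 0)] at hwuu
  rw [fderiv_pd hw2 (0, 1) (0, 1)] at hwvv
  have eg1 : pd1 (pd1 (comp3 ψ)) p₀ = fderiv ℝ (fderiv ℝ (comp3 ψ)) p₀ (1, 0) (1, 0) :=
    fderiv_pd hw2 (1, 0) (1, 0)
  have eg2 : pd2 (pd2 (comp3 ψ)) p₀ = fderiv ℝ (fderiv ℝ (comp3 ψ)) p₀ (0, 1) (0, 1) :=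
    fderiv_pd hw2 (0, 1) (0, 1)
  rw [eg1, eg2]
  exact final_alg _ _ _ _ _ _ _ _ _ _ _ _ _ _ _ _ _ _ _ _ _ (hB p₀ hp₀ (1, 0)) (hB p₀ hp₀ (0, 1))
    hwuu hwvv hR1u hR1v hR2u hR2v hC1 hC2 hlam (hjac p₀ hp₀) hpde' hpq
    (hell (Pi2 ψ p₀) (hPU p₀ hp₀))
end
end
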